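/- arXiv:1402.3480 — 8 statements merged into one kernel-verified Lean document; each statement's English description precedes it below -/
import Mathlib

section
/- Let H be a real Hilbert space and μ a Borel probability measure on H that is nonatomic (μ({x}) = 0 for every x) and is not supported on any line (there is no pair a, b ∈ H with μ({a + t·b : t ∈ ℝ}) = 1). Then the spatial distribution map S(x) = ∫ u(x − y) dμ(y), with u the spatial sign function, is strictly monotone: for all x ≠ y, ⟨S(x) − S(y), x − y⟩ > 0. In particular, S is injective. -/
/-!
Write `u(v) = v / ‖v‖` and `S(x) = ∫ u(x - z) dμ(z)`. For vectors `a, b` one has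
`⟪u a - u b, a - b⟫ = (‖a‖ - ⟪u b, a⟫) + (‖b‖ - ⟪u a, b⟫)`, a sum of two terms that are
nonnegative by Cauchy–Schwarz and vanish together only when `a` and `b` point in the same
direction. With `a = x - z`, `b = y - z` this makes `⟪S x - S y, x - y⟫` the integral of a
nonnegative function that vanishes only on the line through `x` and `y`; if the integral were
`≤ 0`, `μ` would be carried by that line.
-/

open MeasureTheory

section SpatialSign

variable {H : Type*} [NormedAddCommGroup H] [InnerProductSpace ℝ H]

/-- `spatialSign 0 = 0`, matching `u(0) = 0`, because `0⁻¹ = 0`. -/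
noncomputable def spatialSign (v : H) : H := ‖v‖⁻¹ • v

lemma norm_spatialSign_le_one (v : H) : ‖spatialSign v‖ ≤ 1 := by
  rcases eq_or_ne v 0 with rfl | hv
  · simp [spatialSign]
  · exact (norm_smul_inv_norm hv).le

lemma inner_spatialSign_self (v : H) : inner ℝ (spatialSign v) v = ‖v‖ := by
  rcases eq_or_ne v 0 with rfl | hv
  · simp [spatialSign]
  · rw [spatialSign, real_inner_smul_left, real_inner_self_eq_norm_mul_norm,
      inv_mul_cancel_left₀ (norm_ne_zero_iff.mpr hv)]

lemma inner_spatialSign_le (v w : H) : inner ℝ (spatialSign v) w ≤ ‖w‖ :=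
  (real_inner_le_norm _ _).trans
    (mul_le_of_le_one_left (norm_nonneg w) (norm_spatialSign_le_one v))

lemma inner_spatialSign_sub_spatialSign (a b : H) :
    inner ℝ (spatialSign a - spatialSign b) (a - b) =
      (‖a‖ - inner ℝ (spatialSign b) a) + (‖b‖ - inner ℝ (spatialSign a) b) := by
  rw [inner_sub_left, inner_sub_right, inner_sub_right, inner_spatialSign_self,
    inner_spatialSign_self]
  ring

lemma inner_spatialSign_sub_spatialSign_nonneg (a b : H) :
    0 ≤ inner ℝ (spatialSign a - spatialSign b) (a - b) := by
  rw [inner_spatialSign_sub_spatialSign]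
  linarith [inner_spatialSign_le b a, inner_spatialSign_le a b]

lemma sameRay_of_inner_spatialSign_sub_spatialSign_eq_zero {a b : H}
    (h : inner ℝ (spatialSign a - spatialSign b) (a - b) = 0) : SameRay ℝ a b := by
  have hab : inner ℝ (spatialSign a) b = ‖b‖ := by
    rw [inner_spatialSign_sub_spatialSign] at h
    linarith [inner_spatialSign_le b a, inner_spatialSign_le a b]
  rcases eq_or_ne a 0 with rfl | ha
  · exact SameRay.zero_left b
  have hinner : inner ℝ a b = ‖a‖ * ‖b‖ := by
    rw [spatialSign, real_inner_smul_left, inv_mul_eq_iff_eq_mul₀ (norm_ne_zero_iff.mpr ha)]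
      at hab
    exact hab
  rw [sameRay_iff_norm_smul_eq, ← inner_eq_norm_mul_iff_real.mp hinner]

end SpatialSign

lemma exists_eq_add_smul_sub_of_sameRay {E : Type*} [AddCommGroup E] [Module ℝ E]
    {x y z : E} (hxy : x ≠ y) (h : SameRay ℝ (x - z) (y - z)) :
    ∃ t : ℝ, z = x + t • (y - x) := by
  rcases h with hx | hy | ⟨r₁, r₂, -, hr₂, h⟩
  · exact ⟨0, by rw [sub_eq_zero.mp hx, zero_smul, add_zero]⟩
  · exact ⟨1, by rw [sub_eq_zero.mp hy, one_smul, add_sub_cancel]⟩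
  have hr : r₁ - r₂ ≠ 0 := by
    rintro hr
    rw [sub_eq_zero.mp hr] at h
    exact hxy (sub_left_inj.mp (smul_right_injective E hr₂.ne' h))
  refine ⟨-r₂ / (r₁ - r₂), smul_right_injective E hr ?_⟩
  have hz : (r₁ - r₂) • z = r₁ • x - r₂ • y := by
    linear_combination (norm := module) -h
  simp only [hz, smul_add, smul_smul, mul_div_cancel₀ _ hr]
  module

section SpatialDistribution

variable {H : Type*} [NormedAddCommGroup H] [InnerProductSpace ℝ H] [MeasurableSpace H]
  [BorelSpace H] [SecondCountableTopology H] {μ : Measure H}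

lemma integrable_spatialSign_sub [IsFiniteMeasure μ] (x : H) :
    Integrable (fun z => spatialSign (x - z)) μ := by
  have hmeas : Measurable fun z : H => spatialSign (x - z) :=
    (measurable_const.sub measurable_id).norm.inv.smul (measurable_const.sub measurable_id)
  exact .of_bound hmeas.aestronglyMeasurable 1 (ae_of_all _ fun z => norm_spatialSign_le_one _)

lemma inner_integral_spatialSign_sub_eq_integral [CompleteSpace H] [IsFiniteMeasure μ]
    (x y : H) :
    inner ℝ (∫ z, spatialSign (x - z) ∂μ - ∫ z, spatialSign (y - z) ∂μ) (x - y) =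
      ∫ z, inner ℝ (spatialSign (x - z) - spatialSign (y - z)) ((x - z) - (y - z)) ∂μ := by
  have hx := integrable_spatialSign_sub (μ := μ) x
  have hy := integrable_spatialSign_sub (μ := μ) y
  simp_rw [sub_sub_sub_cancel_right, real_inner_comm (x - y)]
  rw [← integral_sub hx hy]
  exact (integral_inner (hx.sub hy) (x - y)).symm

lemma ae_mem_line_of_inner_integral_spatialSign_sub_nonpos [CompleteSpace H] [IsFiniteMeasure μ]
    {x y : H} (hxy : x ≠ y)
    (h : inner ℝ (∫ z, spatialSign (x - z) ∂μ - ∫ z, spatialSign (y - z) ∂μ) (x - y) ≤ 0) :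
    ∀ᵐ z ∂μ, ∃ t : ℝ, z = x + t • (y - x) := by
  set f : H → ℝ := fun z =>
    inner ℝ (spatialSign (x - z) - spatialSign (y - z)) ((x - z) - (y - z))
  have hf_nonneg : 0 ≤ f := fun z => inner_spatialSign_sub_spatialSign_nonneg _ _
  have hf_int : Integrable f μ := by
    simp_rw [f, sub_sub_sub_cancel_right]
    exact ((integrable_spatialSign_sub x).sub (integrable_spatialSign_sub y)).inner_const _
  rw [inner_integral_spatialSign_sub_eq_integral] at h
  have hf_zero : f =ᵐ[μ] 0 := (integral_eq_zero_iff_of_nonneg hf_nonneg hf_int).mp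
    (h.antisymm (integral_nonneg hf_nonneg))
  filter_upwards [hf_zero] with z hz
  exact exists_eq_add_smul_sub_of_sameRay hxy
    (sameRay_of_inner_spatialSign_sub_spatialSign_eq_zero hz)

end SpatialDistribution

theorem spatial_distribution_strictly_monotone_general {H : Type*} [NormedAddCommGroup H]
    [InnerProductSpace ℝ H] [CompleteSpace H] [MeasurableSpace H] [BorelSpace H]
    [SecondCountableTopology H] (μ : Measure H) [IsProbabilityMeasure μ]
    (hline : ¬ ∃ a b : H, μ {p : H | ∃ t : ℝ, p = a + t • b} = 1)
    (S : H → H) (hS : ∀ x, S x = ∫ y, ‖x - y‖⁻¹ • (x - y) ∂μ) :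
    (∀ x y : H, x ≠ y → 0 < @inner ℝ H _ (S x - S y) (x - y)) ∧
      Function.Injective S := by
  have hmono : ∀ x y : H, x ≠ y → 0 < @inner ℝ H _ (S x - S y) (x - y) := by
    intro x y hxy
    by_contra! hle
    rw [hS, hS] at hle
    have hae := ae_mem_line_of_inner_integral_spatialSign_sub_nonpos hxy hle
    refine hline ⟨x, y - x, ?_⟩
    have hline_ae : {p : H | ∃ t : ℝ, p = x + t • (y - x)} =ᵐ[μ] Set.univ :=
      ae_eq_univ.mpr (ae_iff.mp hae)
    rw [measure_congr hline_ae, measure_univ]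
  refine ⟨hmono, fun x y hSxy => ?_⟩
  by_contra hxy
  simpa [hSxy] using hmono x y hxy

/-- If `μ` is a nonatomic Borel probability measure on a real Hilbert space that is
not supported on any line, then the spatial distribution map
`S(x) = ∫ u(x − y) dμ(y)` is strictly monotone; in particular it is injective. -/
theorem spatial_distribution_strictly_monotone {H : Type*} [NormedAddCommGroup H]
    [InnerProductSpace ℝ H] [CompleteSpace H] [MeasurableSpace H] [BorelSpace H]
    [SecondCountableTopology H] (μ : Measure H) [IsProbabilityMeasure μ]
    (hna : ∀ x : H, μ {x} = 0)
    (hline : ¬ ∃ a b : H, μ {p : H | ∃ t : ℝ, p = a + t • b} = 1)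
    (S : H → H) (hS : ∀ x, S x = ∫ y, ‖x - y‖⁻¹ • (x - y) ∂μ) :
    (∀ x y : H, x ≠ y → 0 < @inner ℝ H _ (S x - S y) (x - y)) ∧
      Function.Injective S :=
  spatial_distribution_strictly_monotone_general μ hline S hS
end

section
/- Let H be a real Hilbert space, μ a Borel probability measure on H, and X ∼ μ. Suppose E[1/‖x₀ − X‖] < ∞ and μ({x₀}) = 0 for some x₀ ∈ H. Then the spatial distribution S is continuous at x₀ in the norm topology; in fact ‖S(x) − S(x₀)‖ ≤ 2 E[1/‖x₀ − X‖] · ‖x − x₀‖ whenever x ≠ x₀. -/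
open MeasureTheory

lemma unit_diff_bound {H : Type*} [NormedAddCommGroup H] [NormedSpace ℝ H]
    (a b : H) (hb : b ≠ 0) :
    ‖‖a‖⁻¹ • a - ‖b‖⁻¹ • b‖ ≤ 2 * ‖b‖⁻¹ * ‖a - b‖ := by
  have hbn : (0:ℝ) < ‖b‖ := norm_pos_iff.2 hb
  rcases eq_or_ne a 0 with rfl | ha
  · simp only [norm_zero, inv_zero, zero_smul, zero_sub, norm_neg, zero_sub, norm_neg]
    rw [norm_smul, norm_inv, norm_norm, inv_mul_cancel₀ hbn.ne']
    calc (1:ℝ) ≤ 2 := by norm_num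
    _ = 2 * ‖b‖⁻¹ * ‖b‖ := by field_simp
  · have han : (0:ℝ) < ‖a‖ := norm_pos_iff.2 ha
    have hdec : ‖a‖⁻¹ • a - ‖b‖⁻¹ • b = ‖b‖⁻¹ • (a - b) + (‖a‖⁻¹ - ‖b‖⁻¹) • a := by
      rw [smul_sub, sub_smul]; abel
    rw [hdec]
    have h1 : ‖‖b‖⁻¹ • (a - b)‖ = ‖b‖⁻¹ * ‖a - b‖ := by
      rw [norm_smul, norm_inv, norm_norm]
    have h2 : ‖(‖a‖⁻¹ - ‖b‖⁻¹) • a‖ ≤ ‖b‖⁻¹ * ‖a - b‖ := by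
      rw [norm_smul, Real.norm_eq_abs]
      have : |‖a‖⁻¹ - ‖b‖⁻¹| = |‖b‖ - ‖a‖| / (‖a‖ * ‖b‖) := by
        rw [inv_sub_inv han.ne' hbn.ne', abs_div, abs_of_pos (mul_pos han hbn)]
      rw [this]
      have habs : |‖b‖ - ‖a‖| ≤ ‖a - b‖ := by
        rw [abs_sub_comm]
        simpa using abs_norm_sub_norm_le a b
      calc |‖b‖ - ‖a‖| / (‖a‖ * ‖b‖) * ‖a‖ = |‖b‖ - ‖a‖| / ‖b‖ := by field_simp
        _ ≤ ‖a - b‖ / ‖b‖ := by gcongr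
        _ = ‖b‖⁻¹ * ‖a - b‖ := by rw [div_eq_inv_mul]
    calc ‖‖b‖⁻¹ • (a - b) + (‖a‖⁻¹ - ‖b‖⁻¹) • a‖
        ≤ ‖‖b‖⁻¹ • (a - b)‖ + ‖(‖a‖⁻¹ - ‖b‖⁻¹) • a‖ := norm_add_le _ _
      _ ≤ ‖b‖⁻¹ * ‖a - b‖ + ‖b‖⁻¹ * ‖a - b‖ := by rw [h1]; linarith [h2]
      _ = 2 * ‖b‖⁻¹ * ‖a - b‖ := by ring

/-- If `E[1/‖x₀ − X‖] < ∞` and `μ({x₀}) = 0`, then the spatial distribution `S` is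
continuous at `x₀`; in fact `‖S(x) − S(x₀)‖ ≤ 2 E[1/‖x₀ − X‖] ‖x − x₀‖` for `x ≠ x₀`. -/
theorem spatial_distribution_continuousAt {H : Type*} [NormedAddCommGroup H]
    [InnerProductSpace ℝ H] [CompleteSpace H] [MeasurableSpace H] [BorelSpace H]
    [SecondCountableTopology H] (μ : Measure H) [IsProbabilityMeasure μ] (x₀ : H)
    (hint : Integrable (fun y => ‖x₀ - y‖⁻¹) μ) (hx₀ : μ {x₀} = 0)
    (S : H → H) (hS : ∀ x, S x = ∫ y, ‖x - y‖⁻¹ • (x - y) ∂μ) :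
    ContinuousAt S x₀ ∧
      ∀ x : H, x ≠ x₀ →
        ‖S x - S x₀‖ ≤ 2 * (∫ y, ‖x₀ - y‖⁻¹ ∂μ) * ‖x - x₀‖ := by
  set I : ℝ := ∫ y, ‖x₀ - y‖⁻¹ ∂μ with hI
  have hI0 : 0 ≤ I := integral_nonneg fun y => inv_nonneg.2 (norm_nonneg _)
  have hm : ∀ x : H, Measurable (fun y : H => ‖x - y‖⁻¹ • (x - y)) := fun x =>
    ((measurable_const.sub measurable_id).norm.inv).smul (measurable_const.sub measurable_id)
  have hintf : ∀ x : H, Integrable (fun y : H => ‖x - y‖⁻¹ • (x - y)) μ := by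
    intro x
    refine Integrable.mono' (integrable_const 1) (hm x).aestronglyMeasurable ?_
    filter_upwards with y
    rcases eq_or_ne (x - y) 0 with h | h
    · simp [h]
    · rw [norm_smul, norm_inv, norm_norm, inv_mul_cancel₀ (norm_pos_iff.2 h).ne']
  have key : ∀ x : H, ‖S x - S x₀‖ ≤ 2 * I * ‖x - x₀‖ := by
    intro x
    rw [hS x, hS x₀, ← integral_sub (hintf x) (hintf x₀)]
    have hae : ∀ᵐ y ∂μ, y ≠ x₀ := by
      rw [ae_iff]
      convert hx₀ using 2
      ext y; simp [eq_comm]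
    calc ‖∫ y, (‖x - y‖⁻¹ • (x - y) - ‖x₀ - y‖⁻¹ • (x₀ - y)) ∂μ‖
        ≤ ∫ y, ‖‖x - y‖⁻¹ • (x - y) - ‖x₀ - y‖⁻¹ • (x₀ - y)‖ ∂μ :=
          norm_integral_le_integral_norm _
      _ ≤ ∫ y, 2 * ‖x - x₀‖ * ‖x₀ - y‖⁻¹ ∂μ := by
          refine integral_mono_ae (((hintf x).sub (hintf x₀)).norm)
            ((hint.const_mul (2 * ‖x - x₀‖))) ?_
          filter_upwards [hae] with y hy
          have hb : x₀ - y ≠ 0 := sub_ne_zero.2 hy.symm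
          have := unit_diff_bound (x - y) (x₀ - y) hb
          have hab : x - y - (x₀ - y) = x - x₀ := by abel
          rw [hab] at this
          calc ‖‖x - y‖⁻¹ • (x - y) - ‖x₀ - y‖⁻¹ • (x₀ - y)‖
              ≤ 2 * ‖x₀ - y‖⁻¹ * ‖x - x₀‖ := this
            _ = 2 * ‖x - x₀‖ * ‖x₀ - y‖⁻¹ := by ring
      _ = 2 * ‖x - x₀‖ * I := integral_const_mul _ _
      _ = 2 * I * ‖x - x₀‖ := by ring
  refine ⟨?_, fun x _ => key x⟩
  rw [ContinuousAt]
  have h0 : Filter.Tendsto (fun x => S x - S x₀) (nhds x₀) (nhds 0) := by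
    apply squeeze_zero_norm key
    have : Filter.Tendsto (fun x : H => ‖x - x₀‖) (nhds x₀) (nhds 0) := by
      have h := ((continuous_id.sub (continuous_const (y := x₀))).norm.tendsto x₀)
      simpa using h
    simpa using (this.const_mul (2 * I))
  have := h0.add (tendsto_const_nhds (x := S x₀))
  simpa using this
end

section
/- Let H be a real Hilbert space, X a random element in H, c > 0, a ∈ H, and A : H → H a surjective linear isometry. Let L(x) = c·A(x) + a. Then the spatial distribution of L(X) at L(x) equals A applied to the spatial distribution of X at x: E[u(L(x) − L(X))] = A(E[u(x − X)]). Consequently, the spatial depth is affine invariant: SD_{L(X)}(L(x)) = SD_X(x). -/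
open MeasureTheory ProbabilityTheory

/-- For `L(x) = c • A(x) + a` with `c > 0` and `A` a surjective linear isometry, the
spatial distribution of `L(X)` at `L(x)` is `A` applied to the spatial distribution of
`X` at `x`; consequently the spatial depth is invariant under such transformations. -/
theorem spatial_distribution_affine_equivariant {Ω : Type*} [MeasureSpace Ω]
    [IsProbabilityMeasure (ℙ : Measure Ω)]
    {H : Type*} [NormedAddCommGroup H] [InnerProductSpace ℝ H] [CompleteSpace H]
    [MeasurableSpace H] [BorelSpace H] [SecondCountableTopology H]
    (X : Ω → H) (hX : Measurable X) (c : ℝ) (hc : 0 < c) (a : H)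
    (A : H →ₗᵢ[ℝ] H) (hA : Function.Surjective A)
    (L : H → H) (hL : ∀ x, L x = c • A x + a) (x : H) :
    (∫ ω, ‖L x - L (X ω)‖⁻¹ • (L x - L (X ω)))
        = A (∫ ω, ‖x - X ω‖⁻¹ • (x - X ω)) ∧
      1 - ‖∫ ω, ‖L x - L (X ω)‖⁻¹ • (L x - L (X ω))‖
        = 1 - ‖∫ ω, ‖x - X ω‖⁻¹ • (x - X ω)‖ := by
  have key : ∀ ω, ‖L x - L (X ω)‖⁻¹ • (L x - L (X ω))
      = A (‖x - X ω‖⁻¹ • (x - X ω)) := by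
    intro ω
    have hdiff : L x - L (X ω) = c • A (x - X ω) := by
      simp only [hL, map_sub, smul_sub]
      abel
    rw [hdiff]
    rcases eq_or_ne (x - X ω) 0 with h | h
    · simp [h]
    · have hne : ‖x - X ω‖ ≠ 0 := norm_ne_zero_iff.mpr h
      rw [norm_smul, A.norm_map, _root_.map_smul, smul_smul, Real.norm_eq_abs,
        abs_of_pos hc, mul_inv]
      rw [mul_comm c⁻¹, mul_assoc, inv_mul_cancel₀ hc.ne', mul_one]
  have hmeas : Measurable (fun ω => ‖x - X ω‖⁻¹ • (x - X ω)) := by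
    have hv : Measurable (fun ω => x - X ω) := measurable_const.sub hX
    exact (hv.norm.inv).smul hv
  have hint : Integrable (fun ω => ‖x - X ω‖⁻¹ • (x - X ω)) ℙ := by
    refine ⟨hmeas.aestronglyMeasurable, ?_⟩
    refine (integrable_const (1:ℝ)).2.mono' ?_
    filter_upwards with ω
    rcases eq_or_ne (x - X ω) 0 with h | h
    · simp [h]
    · have hne : ‖x - X ω‖ ≠ 0 := norm_ne_zero_iff.mpr h
      rw [norm_smul, norm_inv, norm_norm, inv_mul_cancel₀ hne]
  have h1 : (∫ ω, ‖L x - L (X ω)‖⁻¹ • (L x - L (X ω)))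
      = A (∫ ω, ‖x - X ω‖⁻¹ • (x - X ω)) := by
    simp_rw [key]
    exact (A.toContinuousLinearMap.integral_comp_comm hint)
  refine ⟨h1, ?_⟩
  rw [h1, A.norm_map]
end

section
/- Let H be a real Hilbert space, μ a Borel probability measure on H, u ∈ H with ‖u‖ < 1, and define g(Q) = E[‖Q − X‖ − ‖X‖] − ⟨u, Q⟩ for X ∼ μ. Then g is a real-valued convex function on H, and g is coercive: g(Q) → ∞ as ‖Q‖ → ∞; more precisely g(Q) ≥ (1 − ‖u‖)‖Q‖ − 2E[‖X‖]. -/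
open MeasureTheory Filter

/-- The spatial-quantile objective `g(Q) = E[‖Q − X‖ − ‖X‖] − ⟨u, Q⟩` (with `‖u‖ < 1`)
is convex and coercive: `g(Q) ≥ (1 − ‖u‖)‖Q‖ − 2E[‖X‖]`, and `g(Q) → ∞` as `‖Q‖ → ∞`. -/
theorem spatial_quantile_objective_convex_coercive {H : Type*} [NormedAddCommGroup H]
    [InnerProductSpace ℝ H] [CompleteSpace H] [MeasurableSpace H] [BorelSpace H]
    [SecondCountableTopology H] (μ : Measure H) [IsProbabilityMeasure μ]
    (hμ : Integrable (fun x => ‖x‖) μ)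
    (u : H) (hu : ‖u‖ < 1)
    (g : H → ℝ)
    (hg : ∀ Q, g Q = (∫ x, (‖Q - x‖ - ‖x‖) ∂μ) - @inner ℝ H _ u Q) :
    ConvexOn ℝ Set.univ g ∧
      Tendsto g (comap norm atTop) atTop ∧
      ∀ Q : H, (1 - ‖u‖) * ‖Q‖ - 2 * (∫ x, ‖x‖ ∂μ) ≤ g Q := by
  have intg : ∀ Q : H, Integrable (fun x => ‖Q - x‖ - ‖x‖) μ := by
    intro Q
    refine Integrable.mono' (integrable_const ‖Q‖) ?_ ?_
    · exact (((continuous_const.sub continuous_id).norm).sub continuous_norm).aestronglyMeasurable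
    · refine Filter.Eventually.of_forall fun x => ?_
      have h := abs_norm_sub_norm_le (Q - x) (-x)
      simp only [norm_neg, sub_neg_eq_add, sub_add_cancel] at h
      simpa using h
  -- lower bound
  have lb : ∀ Q : H, (1 - ‖u‖) * ‖Q‖ - 2 * (∫ x, ‖x‖ ∂μ) ≤ g Q := by
    intro Q
    rw [hg]
    have h1 : ∫ x, (‖Q‖ - 2 * ‖x‖) ∂μ ≤ ∫ x, (‖Q - x‖ - ‖x‖) ∂μ := by
      refine integral_mono ((integrable_const _).sub (hμ.const_mul 2)) (intg Q) fun x => ?_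
      have := norm_sub_norm_le Q x
      nlinarith [norm_nonneg x]
    have h2 : ∫ x, (‖Q‖ - 2 * ‖x‖) ∂μ = ‖Q‖ - 2 * ∫ x, ‖x‖ ∂μ := by
      rw [integral_sub (integrable_const _) (hμ.const_mul 2), integral_const,
        integral_const_mul]
      simp [measure_univ]
    have h3 : @inner ℝ H _ u Q ≤ ‖u‖ * ‖Q‖ := real_inner_le_norm u Q
    nlinarith [norm_nonneg Q]
  refine ⟨?_, ?_, lb⟩
  · refine ⟨convex_univ, fun P _ Q _ a b ha hb hab => ?_⟩
    simp only [hg, smul_eq_mul]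
    have key : ∫ x, (‖a • P + b • Q - x‖ - ‖x‖) ∂μ
        ≤ a * ∫ x, (‖P - x‖ - ‖x‖) ∂μ + b * ∫ x, (‖Q - x‖ - ‖x‖) ∂μ := by
      have := integral_mono (intg (a • P + b • Q))
        (((intg P).const_mul a).add ((intg Q).const_mul b)) (fun x => by
          have hx : a • P + b • Q - x = a • (P - x) + b • (Q - x) := by
            calc a • P + b • Q - x = a • P + b • Q - (a + b) • x := by rw [hab, one_smul]
              _ = a • (P - x) + b • (Q - x) := by
                rw [add_smul, smul_sub, smul_sub]; abel
          have h4 : ‖a • P + b • Q - x‖ ≤ a * ‖P - x‖ + b * ‖Q - x‖ := by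
            rw [hx]
            calc ‖a • (P - x) + b • (Q - x)‖ ≤ ‖a • (P - x)‖ + ‖b • (Q - x)‖ :=
                norm_add_le _ _
              _ = a * ‖P - x‖ + b * ‖Q - x‖ := by
                rw [norm_smul, norm_smul, Real.norm_of_nonneg ha, Real.norm_of_nonneg hb]
          have : a * ‖x‖ + b * ‖x‖ = ‖x‖ := by rw [← add_mul, hab, one_mul]
          show ‖a • P + b • Q - x‖ - ‖x‖ ≤ a * (‖P - x‖ - ‖x‖) + b * (‖Q - x‖ - ‖x‖)
          nlinarith)
      simp only [Pi.add_apply] at this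
      rwa [integral_add ((intg P).const_mul a) ((intg Q).const_mul b),
        integral_const_mul, integral_const_mul] at this
    have hinner : @inner ℝ H _ u (a • P + b • Q)
        = a * @inner ℝ H _ u P + b * @inner ℝ H _ u Q := by
      rw [inner_add_right, inner_smul_right, inner_smul_right]
    linarith
  · have hpos : (0:ℝ) < 1 - ‖u‖ := by linarith
    refine tendsto_atTop_mono lb ?_
    have h1 : Tendsto (fun r : ℝ => (1 - ‖u‖) * r - 2 * ∫ x, ‖x‖ ∂μ) atTop atTop :=
      tendsto_atTop_add_const_right _ _ (tendsto_id.const_mul_atTop hpos)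
    exact h1.comp tendsto_comap
end

section
/- Let H be a real Hilbert space and μ a Borel probability measure on H that is nonatomic and not supported on any line. For u ∈ H with ‖u‖ < 1, the function g(Q) = E[‖Q − X‖ − ‖X‖] − ⟨u, Q⟩ is strictly convex on H; consequently g has at most one minimizer (the spatial u-quantile is unique when it exists). -/
open MeasureTheory

section Aux

variable {H : Type*} [NormedAddCommGroup H] [InnerProductSpace ℝ H] [CompleteSpace H]
  [MeasurableSpace H] [BorelSpace H] [SecondCountableTopology H]

private lemma aux_integrable (μ : Measure H) [IsProbabilityMeasure μ] (Q : H) :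
    Integrable (fun x => ‖Q - x‖ - ‖x‖) μ := by
  refine Integrable.mono' (integrable_const ‖Q‖)
    ((Continuous.sub ((continuous_const.sub continuous_id).norm) continuous_norm).aestronglyMeasurable)
    (Filter.Eventually.of_forall fun x => ?_)
  have := abs_norm_sub_norm_le (Q - x) (-x)
  simpa [norm_neg] using this

private lemma aux_line_closed (a b : H) :
    IsClosed {p : H | ∃ t : ℝ, p = a + t • b} := by
  have : {p : H | ∃ t : ℝ, p = a + t • b} = (fun v => a + v) '' (Submodule.span ℝ {b} : Set H) := by
    ext p
    simp only [Set.mem_setOf_eq, Set.mem_image, SetLike.mem_coe, Submodule.mem_span_singleton]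
    constructor
    · rintro ⟨t, rfl⟩; exact ⟨t • b, ⟨t, rfl⟩, rfl⟩
    · rintro ⟨v, ⟨t, rfl⟩, rfl⟩; exact ⟨t, rfl⟩
  rw [this]
  exact (Homeomorph.addLeft a).isClosedMap _ (Submodule.closed_of_finiteDimensional _)

private lemma aux_not_sameRay {Q₁ Q₂ x : H} (hne : Q₁ ≠ Q₂)
    (hx : x ∉ {p : H | ∃ t : ℝ, p = Q₂ + t • (Q₁ - Q₂)}) :
    ¬ SameRay ℝ (Q₁ - x) (Q₂ - x) := by
  intro h
  apply hx
  rcases h with h0 | h0 | ⟨r₁, r₂, hr₁, hr₂, hr⟩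
  · exact ⟨1, by rw [sub_eq_zero] at h0; rw [← h0]; module⟩
  · exact ⟨0, by rw [sub_eq_zero] at h0; rw [← h0]; module⟩
  · have hd : r₂ - r₁ ≠ 0 := by
      intro hd
      have : r₁ = r₂ := by linarith [sub_eq_zero.mp hd]
      subst this
      apply hne
      have := hr
      have h2 : r₁ • (Q₁ - Q₂) = 0 := by
        have : r₁ • (Q₁ - x) - r₁ • (Q₂ - x) = 0 := by rw [hr]; abel
        rw [← this]; module
      have := (smul_eq_zero.mp h2).resolve_left (ne_of_gt hr₁)
      exact sub_eq_zero.mp this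
    refine ⟨-r₁ / (r₂ - r₁), ?_⟩
    apply smul_right_injective H hd
    have h1 : (r₂ - r₁) • x = r₂ • Q₂ - r₁ • Q₁ := by
      linear_combination (norm := module) hr
    have hc : (r₂ - r₁) * (-r₁ / (r₂ - r₁)) = -r₁ := by field_simp
    show (r₂ - r₁) • x = (r₂ - r₁) • (Q₂ + (-r₁ / (r₂ - r₁)) • (Q₁ - Q₂))
    rw [h1, smul_add, smul_smul, hc]
    module

private lemma aux_key (μ : Measure H) [IsProbabilityMeasure μ]
    (hline : ¬ ∃ a b : H, μ {p : H | ∃ t : ℝ, p = a + t • b} = 1)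
    {Q₁ Q₂ : H} (hne : Q₁ ≠ Q₂) {a b : ℝ} (ha : 0 < a) (hb : 0 < b) (hab : a + b = 1) :
    (∫ x, (‖a • Q₁ + b • Q₂ - x‖ - ‖x‖) ∂μ) <
      a * (∫ x, (‖Q₁ - x‖ - ‖x‖) ∂μ) + b * (∫ x, (‖Q₂ - x‖ - ‖x‖) ∂μ) := by
  set L : Set H := {p : H | ∃ t : ℝ, p = Q₂ + t • (Q₁ - Q₂)} with hL
  have hLmeas : MeasurableSet L := (aux_line_closed Q₂ (Q₁ - Q₂)).measurableSet
  have hLlt : μ L < 1 := lt_of_le_of_ne prob_le_one (fun h => hline ⟨Q₂, Q₁ - Q₂, h⟩)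
  have hLc : 0 < μ Lᶜ := by
    rw [measure_compl hLmeas (measure_ne_top μ L)]
    simpa using tsub_pos_of_lt hLlt
  set d : H → ℝ := fun x =>
    a * (‖Q₁ - x‖ - ‖x‖) + b * (‖Q₂ - x‖ - ‖x‖) - (‖a • Q₁ + b • Q₂ - x‖ - ‖x‖) with hd
  have hcomb : ∀ x : H, a • Q₁ + b • Q₂ - x = a • (Q₁ - x) + b • (Q₂ - x) := by
    intro x
    have h : (a + b) • x = x := by rw [hab, one_smul]
    linear_combination (norm := module) h
  have hd_eq : ∀ x : H, d x =
      a * ‖Q₁ - x‖ + b * ‖Q₂ - x‖ - ‖a • (Q₁ - x) + b • (Q₂ - x)‖ := by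
    intro x
    show a * (‖Q₁ - x‖ - ‖x‖) + b * (‖Q₂ - x‖ - ‖x‖) - (‖a • Q₁ + b • Q₂ - x‖ - ‖x‖) = _
    rw [hcomb x]
    linear_combination (-‖x‖ : ℝ) * hab
  have hd_nonneg : ∀ x : H, 0 ≤ d x := by
    intro x
    rw [hd_eq x]
    have h1 := norm_add_le (a • (Q₁ - x)) (b • (Q₂ - x))
    rw [norm_smul, norm_smul, Real.norm_eq_abs, Real.norm_eq_abs,
      abs_of_pos ha, abs_of_pos hb] at h1
    linarith
  have hd_pos : ∀ x ∈ Lᶜ, 0 < d x := by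
    intro x hx
    rw [hd_eq x]
    have hray : ¬ SameRay ℝ (a • (Q₁ - x)) (b • (Q₂ - x)) := by
      intro h
      have h2 : SameRay ℝ (Q₁ - x) (Q₂ - x) := by
        have := h.pos_smul_left (show (0:ℝ) < a⁻¹ by positivity)
        rw [smul_smul, inv_mul_cancel₀ (ne_of_gt ha), one_smul] at this
        have := this.pos_smul_right (show (0:ℝ) < b⁻¹ by positivity)
        rwa [smul_smul, inv_mul_cancel₀ (ne_of_gt hb), one_smul] at this
      exact aux_not_sameRay hne hx h2
    have h1 := norm_add_lt_of_not_sameRay hray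
    rw [norm_smul, norm_smul, Real.norm_eq_abs, Real.norm_eq_abs,
      abs_of_pos ha, abs_of_pos hb] at h1
    linarith
  have hi₁ := aux_integrable μ Q₁
  have hi₂ := aux_integrable μ Q₂
  have hi₃ := aux_integrable μ (a • Q₁ + b • Q₂)
  have hdint : Integrable d μ := by
    apply Integrable.sub (Integrable.add (hi₁.const_mul a) (hi₂.const_mul b)) hi₃
  have hpos : 0 < ∫ x, d x ∂μ := by
    rw [integral_pos_iff_support_of_nonneg hd_nonneg hdint]
    refine lt_of_lt_of_le hLc (measure_mono ?_)
    intro x hx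
    exact Function.mem_support.mpr (ne_of_gt (hd_pos x hx))
  have hsum : Integrable (fun x => a * (‖Q₁ - x‖ - ‖x‖) + b * (‖Q₂ - x‖ - ‖x‖)) μ :=
    (hi₁.const_mul a).add (hi₂.const_mul b)
  have e1 : ∫ x, d x ∂μ =
      (∫ x, (a * (‖Q₁ - x‖ - ‖x‖) + b * (‖Q₂ - x‖ - ‖x‖)) ∂μ)
        - ∫ x, (‖a • Q₁ + b • Q₂ - x‖ - ‖x‖) ∂μ := integral_sub hsum hi₃
  have e2 : ∫ x, (a * (‖Q₁ - x‖ - ‖x‖) + b * (‖Q₂ - x‖ - ‖x‖)) ∂μ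
      = a * (∫ x, (‖Q₁ - x‖ - ‖x‖) ∂μ) + b * (∫ x, (‖Q₂ - x‖ - ‖x‖) ∂μ) := by
    simpa [integral_const_mul] using integral_add (μ := μ) (hi₁.const_mul a) (hi₂.const_mul b)
  rw [e1, e2] at hpos
  linarith

end Aux

/-- If `μ` is nonatomic and not supported on any line, the spatial-quantile objective
`g(Q) = E[‖Q − X‖ − ‖X‖] − ⟨u, Q⟩` is strictly convex; hence it has at most one
minimizer (the spatial `u`-quantile is unique when it exists). -/
theorem spatial_quantile_objective_strictly_convex {H : Type*} [NormedAddCommGroup H]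
    [InnerProductSpace ℝ H] [CompleteSpace H] [MeasurableSpace H] [BorelSpace H]
    [SecondCountableTopology H] (μ : Measure H) [IsProbabilityMeasure μ]
    (hna : ∀ x : H, μ {x} = 0)
    (hline : ¬ ∃ a b : H, μ {p : H | ∃ t : ℝ, p = a + t • b} = 1)
    (u : H) (hu : ‖u‖ < 1)
    (g : H → ℝ)
    (hg : ∀ Q, g Q = (∫ x, (‖Q - x‖ - ‖x‖) ∂μ) - @inner ℝ H _ u Q) :
    StrictConvexOn ℝ Set.univ g ∧
      ∀ Q₁ Q₂ : H, IsMinOn g Set.univ Q₁ → IsMinOn g Set.univ Q₂ → Q₁ = Q₂ := by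
  have hsc : StrictConvexOn ℝ Set.univ g := by
    refine ⟨convex_univ, fun Q₁ _ Q₂ _ hne a b ha hb hab => ?_⟩
    rw [hg, hg, hg]
    have hkey := aux_key μ hline hne ha hb hab
    have hinner : @inner ℝ H _ u (a • Q₁ + b • Q₂)
        = a * @inner ℝ H _ u Q₁ + b * @inner ℝ H _ u Q₂ := by
      rw [inner_add_right, inner_smul_right, inner_smul_right]
    rw [hinner]
    have : a • g Q₁ = a * g Q₁ := rfl
    simp only [smul_eq_mul]
    linarith
  exact ⟨hsc, fun Q₁ Q₂ h₁ h₂ => hsc.eq_of_isMinOn h₁ h₂ (Set.mem_univ _) (Set.mem_univ _)⟩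
end

section
/- Let H be a real Hilbert space and X₁, …, Xₙ points in H, u ∈ H with ‖u‖ < 1. If Q̂ minimizes Q ↦ (1/n)∑ᵢ(‖Q − Xᵢ‖ − ‖Xᵢ‖) − ⟨u, Q⟩ over H, then ‖∑ᵢ uᵢ‖ ≤ cardinality of {i : Xᵢ = Q̂} + n‖u‖ where uᵢ = (Q̂ − Xᵢ)/‖Q̂ − Xᵢ‖ for Xᵢ ≠ Q̂ and uᵢ = 0 otherwise; in particular, ‖∑_{i : Xᵢ ≠ Q̂} (Q̂ − Xᵢ)/‖Q̂ − Xᵢ‖ − n·u‖ ≤ #{i : Xᵢ = Q̂}. -/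
open Finset Classical
noncomputable section
open scoped Classical

/-! Along a ray `t ↦ Q̂ + t • w`, `t ≥ 0`, the objective `∑ᵢ ‖Q - Xᵢ‖ - ⟪n • v, Q⟫` has right
derivative `⟪∑ᵢ uᵢ - n • v, w⟫ + #{i | Xᵢ = Q̂} * ‖w‖` at `0`: the norm has gradient `a / ‖a‖`
away from `0`, and each term with `Xᵢ = Q̂` is `t * ‖w‖`. At a minimum this is nonnegative for
every `w`, and `w = n • v - ∑ᵢ uᵢ` gives the bound. -/

open scoped RealInnerProductSpace

theorem IsMinOn.hasDerivWithinAt_Ici_nonneg {f : ℝ → ℝ} {a f' : ℝ}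
    (h : IsMinOn f (Set.Ici a) a) (hf : HasDerivWithinAt f f' (Set.Ici a) a) : 0 ≤ f' := by
  have hcone : (1 : ℝ) ∈ posTangentConeAt (Set.Ici a) a :=
    mem_posTangentConeAt_of_segment_subset (by simp [segment_eq_Icc, Set.Icc_subset_Ici_self])
  simpa using h.localize.hasFDerivWithinAt_nonneg hf hcone

section

variable {H : Type*} [NormedAddCommGroup H] [InnerProductSpace ℝ H]

theorem hasDerivAt_norm_add_smul {a : H} (ha : a ≠ 0) (w : H) :
    HasDerivAt (fun t : ℝ => ‖a + t • w‖) ⟪‖a‖⁻¹ • a, w⟫ 0 := by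
  have hline : HasDerivAt (fun t : ℝ => a + t • w) w 0 :=
    ((hasDerivAt_id 0).smul_const w).const_add a |>.congr_deriv (one_smul ℝ w)
  convert hline.norm_sq.sqrt (by simpa using ha) using 1
  · simp only [Real.sqrt_sq (norm_nonneg _)]
  · simp only [zero_smul, add_zero, Real.sqrt_sq (norm_nonneg _), real_inner_smul_left]
    field_simp

theorem hasDerivWithinAt_norm_add_smul (a w : H) :
    HasDerivWithinAt (fun t : ℝ => ‖a + t • w‖)
      (⟪‖a‖⁻¹ • a, w⟫ + if a = 0 then ‖w‖ else 0) (Set.Ici 0) 0 := by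
  by_cases ha : a = 0
  · subst ha
    refine ((hasDerivAt_id 0).mul_const ‖w‖).hasDerivWithinAt.congr_of_mem
      (fun t ht => ?_) (Set.mem_Ici.mpr le_rfl) |>.congr_deriv (by simp)
    simp [norm_smul, abs_of_nonneg (Set.mem_Ici.mp ht)]
  · simpa [ha] using (hasDerivAt_norm_add_smul ha w).hasDerivWithinAt

theorem norm_le_of_forall_inner_le {z : H} {r : ℝ} (hr : 0 ≤ r)
    (h : ∀ w, ⟪z, w⟫ ≤ r * ‖w‖) : ‖z‖ ≤ r := by
  rcases (norm_nonneg z).eq_or_lt with hz | hz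
  · exact hz ▸ hr
  · have := h z
    rw [real_inner_self_eq_norm_sq] at this
    nlinarith

variable {ι : Type*} [Fintype ι]

theorem hasDerivWithinAt_sum_norm_sub_inner (X : ι → H) (c Q w : H) :
    HasDerivWithinAt (fun t : ℝ => ∑ i, ‖Q + t • w - X i‖ - ⟪c, Q + t • w⟫)
      (⟪∑ i, ‖Q - X i‖⁻¹ • (Q - X i), w⟫ + #{i | X i = Q} * ‖w‖ - ⟪c, w⟫) (Set.Ici 0) 0 := by
  have hnorms := HasDerivWithinAt.fun_sum (u := univ)
    fun i _ => hasDerivWithinAt_norm_add_smul (Q - X i) w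
  have hinner : HasDerivAt (fun t : ℝ => ⟪c, Q + t • w⟫) ⟪c, w⟫ 0 := by
    have hline := ((hasDerivAt_id (0 : ℝ)).smul_const w).const_add Q
    simpa using (hasDerivAt_const (0 : ℝ) c).inner ℝ hline
  simp only [add_sub_right_comm Q]
  refine (hnorms.sub hinner.hasDerivWithinAt).congr_deriv ?_
  simp [sum_add_distrib, sum_inner, sum_ite, sub_eq_zero, eq_comm]

theorem inner_sub_le_card_mul_norm_of_isMinOn {X : ι → H} {c Q : H}
    (hmin : IsMinOn (fun Q => ∑ i, ‖Q - X i‖ - ⟪c, Q⟫) Set.univ Q) (w : H) :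
    ⟪c - ∑ i, ‖Q - X i‖⁻¹ • (Q - X i), w⟫ ≤ #{i | X i = Q} * ‖w‖ := by
  have hray : IsMinOn (fun t : ℝ => ∑ i, ‖Q + t • w - X i‖ - ⟪c, Q + t • w⟫) (Set.Ici 0) 0 :=
    fun t _ => by simpa using hmin (Set.mem_univ (Q + t • w))
  have := hray.hasDerivWithinAt_Ici_nonneg (hasDerivWithinAt_sum_norm_sub_inner X c Q w)
  rw [inner_sub_left]
  linarith

theorem norm_sum_unit_sub_le_card_of_isMinOn {X : ι → H} {c Q : H}
    (hmin : IsMinOn (fun Q => ∑ i, ‖Q - X i‖ - ⟪c, Q⟫) Set.univ Q) :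
    ‖∑ i, ‖Q - X i‖⁻¹ • (Q - X i) - c‖ ≤ #{i | X i = Q} := by
  rw [norm_sub_rev]
  exact norm_le_of_forall_inner_le (Nat.cast_nonneg _)
    (inner_sub_le_card_mul_norm_of_isMinOn hmin)

end

theorem empirical_spatial_quantile_subgradient_general {H : Type*} [NormedAddCommGroup H]
    [InnerProductSpace ℝ H]
    (n : ℕ) (X : Fin n → H) (v : H)
    (Qhat : H)
    (hmin : IsMinOn
      (fun Q : H => (n : ℝ)⁻¹ * ∑ i, (‖Q - X i‖ - ‖X i‖) - @inner ℝ H _ v Q)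
      Set.univ Qhat) :
    ‖∑ i, ‖Qhat - X i‖⁻¹ • (Qhat - X i)‖
        ≤ (univ.filter (fun i => X i = Qhat)).card + n * ‖v‖ ∧
      ‖(∑ i, ‖Qhat - X i‖⁻¹ • (Qhat - X i)) - (n : ℝ) • v‖
        ≤ (univ.filter (fun i => X i = Qhat)).card := by
  have hunnormalized : IsMinOn (fun Q => ∑ i, ‖Q - X i‖ - ⟪(n : ℝ) • v, Q⟫) Set.univ Qhat := by
    rcases n.eq_zero_or_pos with rfl | hn
    · simp [isMinOn_univ_iff]
    rw [isMinOn_univ_iff] at hmin ⊢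
    intro Q
    have hQ := mul_le_mul_of_nonneg_left (hmin Q) (Nat.cast_nonneg n)
    simp only [sum_sub_distrib, real_inner_smul_left] at hQ ⊢
    field_simp at hQ
    linarith
  have hopt := norm_sum_unit_sub_le_card_of_isMinOn hunnormalized
  refine ⟨?_, hopt⟩
  calc ‖∑ i, ‖Qhat - X i‖⁻¹ • (Qhat - X i)‖
      ≤ ‖∑ i, ‖Qhat - X i‖⁻¹ • (Qhat - X i) - (n : ℝ) • v‖ + ‖(n : ℝ) • v‖ :=
        norm_le_norm_sub_add _ _
    _ ≤ _ := by rw [norm_smul, Real.norm_natCast]; gcongr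

/-- Subgradient optimality condition for the empirical spatial `u`-quantile: if `Q̂`
minimizes `Q ↦ (1/n)∑ᵢ(‖Q − Xᵢ‖ − ‖Xᵢ‖) − ⟨v, Q⟩`, then with
`uᵢ = (Q̂ − Xᵢ)/‖Q̂ − Xᵢ‖` (and `uᵢ = 0` when `Xᵢ = Q̂`) we have
`‖∑ᵢ uᵢ‖ ≤ #{i : Xᵢ = Q̂} + n‖v‖` and `‖∑ᵢ uᵢ − n·v‖ ≤ #{i : Xᵢ = Q̂}`. -/
theorem empirical_spatial_quantile_subgradient {H : Type*} [NormedAddCommGroup H]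
    [InnerProductSpace ℝ H] [CompleteSpace H]
    (n : ℕ) (X : Fin n → H) (v : H) (hv : ‖v‖ < 1)
    (Qhat : H)
    (hmin : IsMinOn
      (fun Q : H => (n : ℝ)⁻¹ * ∑ i, (‖Q - X i‖ - ‖X i‖) - @inner ℝ H _ v Q)
      Set.univ Qhat) :
    ‖∑ i, ‖Qhat - X i‖⁻¹ • (Qhat - X i)‖
        ≤ (univ.filter (fun i => X i = Qhat)).card + n * ‖v‖ ∧
      ‖(∑ i, ‖Qhat - X i‖⁻¹ • (Qhat - X i)) - (n : ℝ) • v‖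
        ≤ (univ.filter (fun i => X i = Qhat)).card :=
  empirical_spatial_quantile_subgradient_general n X v Qhat hmin
end
end

section
/- Let H be a separable real Hilbert space, μ a Borel probability measure on H, and K ⊆ H a compact set. Assume sup_{x ∈ K} E[1/‖x − X‖] < ∞ and μ is nonatomic. Then the empirical spatial distribution Ŝₙ(x) = (1/n)∑ᵢ u(x − Xᵢ), from i.i.d. X₁, …, Xₙ ∼ μ, converges uniformly over x ∈ K to S(x) = E[u(x − X)] in norm, almost surely: sup_{x∈K} ‖Ŝₙ(x) − S(x)‖ → 0 a.s. -/
/-!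
Mathlib's `NormedSpace.normalize` is the spatial sign `u`. At each point `z` of a finite
`δ`-net of `K` the strong law gives `Ŝₙ(z) → S(z)` and `(1/n) ∑ ‖z − Xᵢ‖⁻¹ → E‖z − X‖⁻¹ ≤ C`,
and, `μ` being nonatomic, a.s. no sample hits `z`. The estimate
`‖u(x − y) − u(z − y)‖ ≤ 2‖x − z‖ ‖z − y‖⁻¹` then bounds the oscillation of both `Ŝₙ` and `S`
on the ball of radius `δ` around `z` by `2δ(C + 1)`, so eventually `‖Ŝₙ − S‖ ≤ (4C + 5)δ` on `K`.
Countably many radii `δ = 1/(m + 1)` give uniform convergence almost surely.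
-/

open MeasureTheory ProbabilityTheory Filter Topology Metric Finset NormedSpace

section Normalize

variable {E : Type*} [NormedAddCommGroup E] [NormedSpace ℝ E]

lemma norm_normalize_le_one (v : E) : ‖normalize v‖ ≤ 1 := by
  rcases eq_or_ne v 0 with rfl | hv
  · simp
  · exact (norm_normalize hv).le

lemma norm_normalize_sub_normalize_le (v : E) {w : E} (hw : w ≠ 0) :
    ‖normalize v - normalize w‖ ≤ 2 * ‖v - w‖ * ‖w‖⁻¹ := by
  have radial : ‖(‖v‖⁻¹ - ‖w‖⁻¹) • v‖ ≤ ‖v - w‖ * ‖w‖⁻¹ := by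
    rcases eq_or_ne v 0 with rfl | hv
    · simp only [norm_zero, smul_zero]; positivity
    have hscale : (‖v‖⁻¹ - ‖w‖⁻¹) * ‖v‖ = (‖w‖ - ‖v‖) * ‖w‖⁻¹ := by
      field_simp [norm_ne_zero_iff.2 hv, norm_ne_zero_iff.2 hw]
    calc ‖(‖v‖⁻¹ - ‖w‖⁻¹) • v‖ = |‖w‖ - ‖v‖| * ‖w‖⁻¹ := by
          rw [norm_smul, Real.norm_eq_abs, ← abs_norm v, ← abs_mul, abs_norm, hscale, abs_mul,
            abs_inv, abs_norm]
      _ ≤ ‖v - w‖ * ‖w‖⁻¹ := by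
          gcongr
          rw [abs_sub_comm]
          exact abs_norm_sub_norm_le v w
  calc ‖normalize v - normalize w‖ = ‖‖w‖⁻¹ • (v - w) + (‖v‖⁻¹ - ‖w‖⁻¹) • v‖ := by
        congr 1; simp only [NormedSpace.normalize, smul_sub, sub_smul]; abel
    _ ≤ ‖v - w‖ * ‖w‖⁻¹ + ‖v - w‖ * ‖w‖⁻¹ := by
        refine (norm_add_le _ _).trans (add_le_add ?_ radial)
        rw [norm_smul, norm_inv, norm_norm, mul_comm]
    _ = 2 * ‖v - w‖ * ‖w‖⁻¹ := by ring

lemma norm_normalize_sub_sub_normalize_sub_le (x z : E) {y : E} (hy : y ≠ z) :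
    ‖normalize (x - y) - normalize (z - y)‖ ≤ 2 * ‖x - z‖ * ‖z - y‖⁻¹ := by
  simpa only [sub_sub_sub_cancel_right] using
    norm_normalize_sub_normalize_le (x - y) (sub_ne_zero.2 hy.symm)

lemma norm_average_normalize_sub_le (x z : E) (y : ℕ → E) (hy : ∀ i, y i ≠ z) (n : ℕ) :
    ‖(n : ℝ)⁻¹ • ∑ i ∈ range n, normalize (x - y i) -
        (n : ℝ)⁻¹ • ∑ i ∈ range n, normalize (z - y i)‖
      ≤ 2 * ‖x - z‖ * ((n : ℝ)⁻¹ • ∑ i ∈ range n, ‖z - y i‖⁻¹) := by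
  rw [← smul_sub, ← sum_sub_distrib, norm_smul, norm_inv, Real.norm_natCast, smul_eq_mul]
  calc (n : ℝ)⁻¹ * ‖∑ i ∈ range n, (normalize (x - y i) - normalize (z - y i))‖
      ≤ (n : ℝ)⁻¹ * ∑ i ∈ range n, 2 * ‖x - z‖ * ‖z - y i‖⁻¹ := by
        gcongr
        exact (norm_sum_le _ _).trans
          (sum_le_sum fun i _ => norm_normalize_sub_sub_normalize_sub_le x z (hy i))
    _ = 2 * ‖x - z‖ * ((n : ℝ)⁻¹ * ∑ i ∈ range n, ‖z - y i‖⁻¹) := by rw [← mul_sum]; ring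

variable [MeasurableSpace E] [BorelSpace E]

lemma measurable_normalize : Measurable (normalize : E → E) :=
  measurable_norm.inv.smul measurable_id

variable [SecondCountableTopology E]

lemma integrable_normalize_sub (μ : Measure E) [IsFiniteMeasure μ] (x : E) :
    Integrable (fun y => normalize (x - y)) μ :=
  .of_bound (measurable_normalize.comp (measurable_const.sub measurable_id)).aestronglyMeasurable 1
    (.of_forall fun _ => norm_normalize_le_one _)

lemma norm_integral_normalize_sub_le (μ : Measure E) [IsFiniteMeasure μ] {z : E} (hz : μ {z} = 0)
    (hint : Integrable (fun y => ‖z - y‖⁻¹) μ) (x : E) :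
    ‖∫ y, normalize (x - y) ∂μ - ∫ y, normalize (z - y) ∂μ‖ ≤ 2 * ‖x - z‖ * ∫ y, ‖z - y‖⁻¹ ∂μ := by
  rw [← integral_sub (integrable_normalize_sub μ x) (integrable_normalize_sub μ z),
    ← integral_const_mul]
  refine (norm_integral_le_integral_norm _).trans (integral_mono_ae
    ((integrable_normalize_sub μ x).sub (integrable_normalize_sub μ z)).norm (hint.const_mul _) ?_)
  filter_upwards [compl_mem_ae_iff.2 hz] with y hy
  exact norm_normalize_sub_sub_normalize_sub_le x z hy

end Normalize

section StrongLaw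

variable {Ω H E : Type*} [MeasurableSpace Ω] {P : Measure Ω} [MeasurableSpace H]
  [NormedAddCommGroup E] [NormedSpace ℝ E] [CompleteSpace E] [MeasurableSpace E] [BorelSpace E]
  {X : ℕ → Ω → H} {μ : Measure H}

theorem strong_law_ae_comp (hX : ∀ i, Measurable (X i))
    (hindep : Pairwise fun i j => X i ⟂ᵢ[P] X j) (hdist : ∀ i, P.map (X i) = μ)
    {f : H → E} (hf : Measurable f) (hfi : Integrable f μ) :
    ∀ᵐ ω ∂P, Tendsto (fun n : ℕ => (n : ℝ)⁻¹ • ∑ i ∈ range n, f (X i ω)) atTop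
      (𝓝 (∫ y, f y ∂μ)) := by
  have hident : ∀ i, IdentDistrib (f ∘ X i) (f ∘ X 0) P P := fun i =>
    (IdentDistrib.mk (hX i).aemeasurable (hX 0).aemeasurable (by rw [hdist, hdist])).comp hf
  rw [← hdist 0] at hfi ⊢
  rw [integral_map (hX 0).aemeasurable hfi.aestronglyMeasurable]
  exact strong_law_ae (fun i => f ∘ X i)
    ((integrable_map_measure hfi.aestronglyMeasurable (hX 0).aemeasurable).1 hfi)
    (fun i j hij => (hindep hij).comp hf hf) hident

lemma ae_forall_ne_of_map_eq (hX : ∀ i, Measurable (X i)) (hdist : ∀ i, P.map (X i) = μ)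
    {z : H} (hz : μ {z} = 0) : ∀ᵐ ω ∂P, ∀ i, X i ω ≠ z :=
  ae_all_iff.2 fun i => ae_of_ae_map (hX i).aemeasurable ((hdist i).symm ▸ compl_mem_ae_iff.2 hz)

end StrongLaw

section UniformConvergence

variable {ι α E : Type*} {l : Filter ι} {F : ι → α → E} {f : α → E} {K : Set α}

lemma eventually_forall_dist_le_of_finite_net [PseudoMetricSpace α] [PseudoMetricSpace E]
    {t : Set α} (ht : t.Finite) {δ ε η : ℝ} (hcov : K ⊆ ⋃ z ∈ t, ball z δ) (hε : 0 < ε)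
    (hconv : ∀ z ∈ t, Tendsto (fun n => F n z) l (𝓝 (f z)))
    (hFosc : ∀ z ∈ t, ∀ᶠ n in l, ∀ x ∈ ball z δ, dist (F n x) (F n z) ≤ η)
    (hfosc : ∀ z ∈ t, ∀ x ∈ ball z δ, dist (f x) (f z) ≤ η) :
    ∀ᶠ n in l, ∀ x ∈ K, dist (f x) (F n x) ≤ ε + 2 * η := by
  have hnet : ∀ᶠ n in l, ∀ z ∈ t,
      dist (F n z) (f z) < ε ∧ ∀ x ∈ ball z δ, dist (F n x) (F n z) ≤ η :=
    (eventually_all_finite ht).2 fun z hz =>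
      ((hconv z hz).eventually (ball_mem_nhds _ hε)).and (hFosc z hz)
  filter_upwards [hnet] with n hn x hx
  obtain ⟨z, hz, hxz⟩ := Set.mem_iUnion₂.1 (hcov hx)
  calc dist (f x) (F n x) ≤ dist (f x) (f z) + dist (f z) (F n z) + dist (F n z) (F n x) :=
        dist_triangle4 _ _ _ _
    _ ≤ η + ε + η := by
        gcongr
        · exact hfosc z hz x hxz
        · exact (dist_comm (f z) _ ▸ (hn z hz).1).le
        · exact dist_comm (F n x) _ ▸ (hn z hz).2 x hxz
    _ = ε + 2 * η := by ring

lemma ae_tendstoUniformlyOn_of_forall_pos [PseudoMetricSpace E] {Ω : Type*} [MeasurableSpace Ω]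
    {P : Measure Ω} {F : Ω → ι → α → E} (c : ℝ)
    (h : ∀ δ > 0, ∀ᵐ ω ∂P, ∀ᶠ n in l, ∀ x ∈ K, dist (f x) (F ω n x) ≤ c * δ) :
    ∀ᵐ ω ∂P, TendstoUniformlyOn (F ω) f l K := by
  filter_upwards [ae_all_iff.2 fun m : ℕ => h (1 / (m + 1)) (by positivity)] with ω hω
  refine Metric.tendstoUniformlyOn_iff.2 fun ε hε => ?_
  have hsmall : Tendsto (fun m : ℕ => c * (1 / (m + 1))) atTop (𝓝 0) := by
    simpa using tendsto_one_div_add_atTop_nhds_zero_nat.const_mul c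
  obtain ⟨m, hm⟩ := (hsmall.eventually (gt_mem_nhds hε)).exists
  exact (hω m).mono fun n hn x hx => (hn x hx).trans_lt hm

lemma TendstoUniformlyOn.tendsto_iSup_norm_sub [SeminormedAddCommGroup E]
    (h : TendstoUniformlyOn F f l K) : Tendsto (fun n => ⨆ x ∈ K, ‖F n x - f x‖) l (𝓝 0) := by
  refine Metric.tendsto_nhds.2 fun ε hε => ?_
  filter_upwards [Metric.tendstoUniformlyOn_iff.1 h (ε / 2) (half_pos hε)] with n hn
  have hle : ⨆ x ∈ K, ‖F n x - f x‖ ≤ ε / 2 := Real.iSup_le (fun x => Real.iSup_le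
    (fun hx => by rw [← dist_eq_norm, dist_comm]; exact (hn x hx).le) (half_pos hε).le)
    (half_pos hε).le
  have h0 : 0 ≤ ⨆ x ∈ K, ‖F n x - f x‖ :=
    Real.iSup_nonneg fun x => Real.iSup_nonneg fun _ => norm_nonneg _
  rw [Real.dist_0_eq_abs, abs_of_nonneg h0]
  linarith

end UniformConvergence

theorem ae_tendstoUniformlyOn_empirical_spatial_distribution {Ω : Type*} [MeasurableSpace Ω]
    {P : Measure Ω} {H : Type*} [NormedAddCommGroup H] [NormedSpace ℝ H] [CompleteSpace H]
    [MeasurableSpace H] [BorelSpace H] [SecondCountableTopology H]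
    {μ : Measure H} [IsProbabilityMeasure μ] (hna : ∀ x : H, μ {x} = 0)
    {K : Set H} (hK : IsCompact K) (hint : ∀ x ∈ K, Integrable (fun y => ‖x - y‖⁻¹) μ)
    {C : ℝ} (hC : ∀ x ∈ K, ∫ y, ‖x - y‖⁻¹ ∂μ ≤ C)
    {X : ℕ → Ω → H} (hX : ∀ i, Measurable (X i)) (hindep : Pairwise fun i j => X i ⟂ᵢ[P] X j)
    (hdist : ∀ i, P.map (X i) = μ) :
    ∀ᵐ ω ∂P, TendstoUniformlyOn
      (fun (n : ℕ) x => (n : ℝ)⁻¹ • ∑ i ∈ range n, normalize (x - X i ω))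
      (fun x => ∫ y, normalize (x - y) ∂μ) atTop K := by
  refine ae_tendstoUniformlyOn_of_forall_pos (1 + 4 * (C + 1)) fun δ hδ => ?_
  obtain ⟨t, htK, ht, hcov⟩ := hK.finite_cover_balls hδ
  have hnet : ∀ z ∈ t, ∀ᵐ ω ∂P,
      Tendsto (fun n : ℕ => (n : ℝ)⁻¹ • ∑ i ∈ range n, normalize (z - X i ω)) atTop
        (𝓝 (∫ y, normalize (z - y) ∂μ)) ∧
      Tendsto (fun n : ℕ => (n : ℝ)⁻¹ • ∑ i ∈ range n, ‖z - X i ω‖⁻¹) atTop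
        (𝓝 (∫ y, ‖z - y‖⁻¹ ∂μ)) ∧
      ∀ i, X i ω ≠ z := fun z hz => by
    have hsub : Measurable fun y : H => z - y := measurable_const.sub measurable_id
    filter_upwards [strong_law_ae_comp hX hindep hdist (measurable_normalize.comp hsub)
        (integrable_normalize_sub μ z),
      strong_law_ae_comp hX hindep hdist hsub.norm.inv (hint z (htK hz)),
      ae_forall_ne_of_map_eq hX hdist (hna z)] with ω h₁ h₂ h₃
    exact ⟨h₁, h₂, h₃⟩
  filter_upwards [(ae_ball_iff ht.countable).2 hnet] with ω hω
  refine (eventually_forall_dist_le_of_finite_net ht hcov hδ (η := 2 * δ * (C + 1))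
    (fun z hz => (hω z hz).1) ?_ ?_).mono fun n hn x hx => (hn x hx).trans_eq (by ring)
  · intro z hz
    obtain ⟨-, hL, hne⟩ := hω z hz
    filter_upwards [hL.eventually (gt_mem_nhds ((hC z (htK hz)).trans_lt (lt_add_one C)))]
      with n hn x hx
    rw [dist_eq_norm]
    refine (norm_average_normalize_sub_le x z _ hne n).trans ?_
    gcongr
    exact (mem_ball_iff_norm.1 hx).le
  · intro z hz x hx
    rw [dist_eq_norm]
    refine (norm_integral_normalize_sub_le μ (hna z) (hint z (htK hz)) x).trans ?_
    gcongr
    · exact (mem_ball_iff_norm.1 hx).le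
    · exact (hC z (htK hz)).trans (le_add_of_nonneg_right zero_le_one)

theorem empirical_spatial_distribution_uniform_compact_general {Ω : Type*} [MeasureSpace Ω]
    {H : Type*} [NormedAddCommGroup H] [InnerProductSpace ℝ H] [CompleteSpace H]
    [MeasurableSpace H] [BorelSpace H] [SecondCountableTopology H]
    (μ : Measure H) [IsProbabilityMeasure μ]
    (hna : ∀ x : H, μ {x} = 0)
    (K : Set H) (hK : IsCompact K)
    (hint : ∀ x ∈ K, Integrable (fun y => ‖x - y‖⁻¹) μ)
    (hbdd : ∃ C : ℝ, ∀ x ∈ K, (∫ y, ‖x - y‖⁻¹ ∂μ) ≤ C)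
    (X : ℕ → Ω → H) (hmeas : ∀ i, Measurable (X i))
    (hindep : iIndepFun X ℙ)
    (hdist : ∀ i, Measure.map (X i) ℙ = μ)
    (S : H → H) (hS : ∀ x, S x = ∫ y, ‖x - y‖⁻¹ • (x - y) ∂μ) :
    ∀ᵐ ω ∂ℙ,
      Tendsto (fun n : ℕ => ⨆ x ∈ K,
          ‖((n : ℝ)⁻¹ • ∑ i ∈ Finset.range n, ‖x - X i ω‖⁻¹ • (x - X i ω)) - S x‖)
        atTop (nhds 0) := by
  obtain ⟨C, hC⟩ := hbdd
  obtain rfl : S = fun x => ∫ y, normalize (x - y) ∂μ := funext hS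
  filter_upwards [ae_tendstoUniformlyOn_empirical_spatial_distribution hna hK hint hC hmeas
    (fun i j hij => hindep.indepFun hij) hdist] with ω hω
  exact hω.tendsto_iSup_norm_sub

/-- Uniform Glivenko–Cantelli over a compact set: if `μ` is nonatomic and
`sup_{x ∈ K} E[1/‖x − X‖] < ∞`, then the empirical spatial distribution converges to
the spatial distribution uniformly over the compact set `K`, almost surely. -/
theorem empirical_spatial_distribution_uniform_compact {Ω : Type*} [MeasureSpace Ω]
    [IsProbabilityMeasure (ℙ : Measure Ω)]
    {H : Type*} [NormedAddCommGroup H] [InnerProductSpace ℝ H] [CompleteSpace H]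
    [MeasurableSpace H] [BorelSpace H] [SecondCountableTopology H]
    (μ : Measure H) [IsProbabilityMeasure μ]
    (hna : ∀ x : H, μ {x} = 0)
    (K : Set H) (hK : IsCompact K)
    (hint : ∀ x ∈ K, Integrable (fun y => ‖x - y‖⁻¹) μ)
    (hbdd : ∃ C : ℝ, ∀ x ∈ K, (∫ y, ‖x - y‖⁻¹ ∂μ) ≤ C)
    (X : ℕ → Ω → H) (hmeas : ∀ i, Measurable (X i))
    (hindep : iIndepFun X ℙ)
    (hdist : ∀ i, Measure.map (X i) ℙ = μ)
    (S : H → H) (hS : ∀ x, S x = ∫ y, ‖x - y‖⁻¹ • (x - y) ∂μ) :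
    ∀ᵐ ω ∂ℙ,
      Tendsto (fun n : ℕ => ⨆ x ∈ K,
          ‖((n : ℝ)⁻¹ • ∑ i ∈ Finset.range n, ‖x - X i ω‖⁻¹ • (x - X i ω)) - S x‖)
        atTop (nhds 0) :=
  empirical_spatial_distribution_uniform_compact_general μ hna K hK hint hbdd X hmeas hindep hdist S
    hS
end

section
/- Let H be a real Hilbert space, μ a nonatomic Borel probability measure on H, and suppose the spatial distribution S : H → H is continuous. Then for any x, y ∈ H with y ≠ 0, ‖S(x + n·y)‖ → 1 as n → ∞ over natural numbers n, hence the spatial depth SD(x + n·y) = 1 − ‖S(x + n·y)‖ → 0: the spatial depth vanishes at infinity along any ray. -/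
open MeasureTheory Filter

/-- If `μ` is nonatomic and the spatial distribution `S` is continuous, then along any
ray `x + n·y` (`y ≠ 0`), `‖S(x + n·y)‖ → 1` and the spatial depth
`SD(x + n·y) = 1 − ‖S(x + n·y)‖ → 0` as `n → ∞`. -/
theorem spatial_depth_vanishes_at_infinity {H : Type*} [NormedAddCommGroup H]
    [InnerProductSpace ℝ H] [CompleteSpace H] [MeasurableSpace H] [BorelSpace H]
    [SecondCountableTopology H] (μ : Measure H) [IsProbabilityMeasure μ]
    (hna : ∀ x : H, μ {x} = 0)
    (S : H → H) (hS : ∀ x, S x = ∫ z, ‖x - z‖⁻¹ • (x - z) ∂μ)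
    (hcont : Continuous S) :
    ∀ x y : H, y ≠ 0 →
      Tendsto (fun n : ℕ => ‖S (x + (n : ℝ) • y)‖) atTop (nhds 1) ∧
        Tendsto (fun n : ℕ => 1 - ‖S (x + (n : ℝ) • y)‖) atTop (nhds 0) := by
  intro x y hy
  set g : H → H := fun v => ‖v‖⁻¹ • v with hg
  set L : H := g y with hL
  have hLnorm : ‖L‖ = 1 := by
    simp only [hL, hg, norm_smul, norm_inv, norm_norm]
    exact inv_mul_cancel₀ (norm_ne_zero_iff.mpr hy)
  -- scale invariance of g
  have hscale : ∀ (c : ℝ), 0 < c → ∀ v : H, g (c • v) = g v := by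
    intro c hc v
    rcases eq_or_ne v 0 with rfl | hv
    · simp [hg]
    · simp only [hg, norm_smul, Real.norm_eq_abs, abs_of_pos hc, smul_smul]
      congr 1
      have h1 : ‖v‖ ≠ 0 := norm_ne_zero_iff.mpr hv
      field_simp
  -- continuity of g at y
  have hgcont : ContinuousAt g y := by
    have h1 : ContinuousAt (fun v : H => ‖v‖⁻¹) y :=
      (continuousAt_id.norm).inv₀ (norm_ne_zero_iff.mpr hy)
    exact h1.smul continuousAt_id
  -- main convergence of S along the ray
  have hmain : Tendsto (fun n : ℕ => S (x + (n : ℝ) • y)) atTop (nhds L) := by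
    simp only [hS]
    have := MeasureTheory.tendsto_integral_of_dominated_convergence
      (F := fun (n : ℕ) (z : H) => ‖x + (n : ℝ) • y - z‖⁻¹ • (x + (n : ℝ) • y - z))
      (f := fun _ : H => L) (bound := fun _ : H => (1 : ℝ)) (μ := μ)
      ?_ ?_ ?_ ?_
    · simpa using this
    · intro n
      exact (((measurable_const.sub measurable_id).norm.inv).smul
        (measurable_const.sub measurable_id)).aestronglyMeasurable
    · exact integrable_const 1
    · intro n
      filter_upwards with z
      rcases eq_or_ne (x + (n : ℝ) • y - z) 0 with h | h
      · simp [h]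
      · simp only [norm_smul, norm_inv, norm_norm]
        rw [inv_mul_cancel₀ (norm_ne_zero_iff.mpr h)]
    · filter_upwards with z
      have hv : Tendsto (fun n : ℕ => ((n : ℝ))⁻¹ • (x - z) + y) atTop (nhds y) := by
        have : Tendsto (fun n : ℕ => ((n : ℝ))⁻¹ • (x - z)) atTop (nhds (0 : H)) := by
          have h0 : Tendsto (fun n : ℕ => ((n : ℝ))⁻¹) atTop (nhds 0) :=
            tendsto_inv_atTop_zero.comp tendsto_natCast_atTop_atTop
          simpa using h0.smul_const (x - z)
        simpa using this.add_const y
      have hcomp : Tendsto (fun n : ℕ => g (((n : ℝ))⁻¹ • (x - z) + y)) atTop (nhds L) :=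
        hgcont.tendsto.comp hv
      refine hcomp.congr' ?_
      filter_upwards [eventually_ge_atTop 1] with n hn
      have hnpos : (0 : ℝ) < (n : ℝ) := by exact_mod_cast hn
      have : (n : ℝ) • (((n : ℝ))⁻¹ • (x - z) + y) = x + (n : ℝ) • y - z := by
        rw [smul_add, smul_smul, mul_inv_cancel₀ (ne_of_gt hnpos)]
        simp
        abel
      calc g (((n : ℝ))⁻¹ • (x - z) + y)
          = g ((n : ℝ) • (((n : ℝ))⁻¹ • (x - z) + y)) := (hscale _ hnpos _).symm
        _ = ‖x + (n : ℝ) • y - z‖⁻¹ • (x + (n : ℝ) • y - z) := by rw [this]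
  have h1 : Tendsto (fun n : ℕ => ‖S (x + (n : ℝ) • y)‖) atTop (nhds 1) := by
    have := hmain.norm
    rwa [hLnorm] at this
  refine ⟨h1, ?_⟩
  have := (tendsto_const_nhds (x := (1:ℝ)) (f := atTop (α := ℕ))).sub h1
  simpa using this
end
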